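/- arXiv:2407.03741 — 3 statements merged into one kernel-verified Lean document; each statement's English description precedes it below -/
import Mathlib

section
/- (Rician fading expectation.) Let Ω > 0, σ > 0, θ ∈ (0, π/2], u ≥ 0, and K ≥ 0. Then ∫_0^∞ exp( −r²u² / (4σ² sin²θ) ) · ( 2(K+1) r / Ω ) · exp( −( K + (K+1) r² / Ω ) ) · ( Σ_{j=0}^∞ ( K(K+1) r² / Ω )^j / (j!)² ) dr = ( 4(K+1) σ² sin²θ / ( Ω u² + 4(K+1) σ² sin²θ ) ) · exp( −K Ω u² / ( Ω u² + 4(K+1) σ² sin²θ ) ). -/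
open Real MeasureTheory Set
open scoped Nat

/-! With `L = u²/(4σ² sin²θ) + (K+1)/Ω` and `c = K(K+1)/Ω`, the integrand is a constant times the
series of Gaussian moments `c^j r^(2j+1) exp (-L r²) / (j!)²`, each of which integrates to
`c^j / (2 j! L^(j+1))`. Integrating termwise gives `exp (c/L) / (2L)`. -/

theorem integrableOn_Ioi_pow_mul_exp_neg_mul_sq {b : ℝ} (hb : 0 < b) (n : ℕ) :
    IntegrableOn (fun x : ℝ => x ^ n * exp (-(b * x ^ 2))) (Ioi 0) := by
  simpa [neg_mul] using
    integrableOn_rpow_mul_exp_neg_mul_sq hb (s := n) (by linarith [n.cast_nonneg (α := ℝ)])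

theorem integral_Ioi_pow_mul_exp_neg_mul_sq {b : ℝ} (hb : 0 < b) (j : ℕ) :
    ∫ x in Ioi 0, x ^ (2 * j + 1) * exp (-(b * x ^ 2)) = j ! / (2 * b ^ (j + 1)) := by
  have h := integral_rpow_mul_exp_neg_mul_rpow two_pos (q := (2 * j + 1 : ℕ))
    (by linarith [(2 * j + 1 : ℕ).cast_nonneg (α := ℝ)]) hb
  have hexp : ((2 * j + 1 : ℕ) + 1 : ℝ) / 2 = j + 1 := by push_cast; ring
  rw [neg_div, hexp, Gamma_nat_eq_factorial, rpow_neg hb.le, ← Nat.cast_add_one, rpow_natCast]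
    at h
  simp only [rpow_natCast, rpow_two, neg_mul] at h
  rw [h]
  field_simp

theorem integral_Ioi_mul_exp_neg_mul_sq_mul_tsum {L : ℝ} (hL : 0 < L) (c : ℝ) :
    ∫ r in Ioi 0, r * exp (-(L * r ^ 2)) * ∑' j : ℕ, (c * r ^ 2) ^ j / (j ! : ℝ) ^ 2
      = exp (c / L) / (2 * L) := by
  let F : ℝ → ℕ → ℝ → ℝ := fun a j r =>
    a ^ j / (j ! : ℝ) ^ 2 * (r ^ (2 * j + 1) * exp (-(L * r ^ 2)))
  have hseries : ∀ r, r * exp (-(L * r ^ 2)) * ∑' j : ℕ, (c * r ^ 2) ^ j / (j ! : ℝ) ^ 2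
      = ∑' j, F c j r := by
    intro r
    rw [mul_comm, ← tsum_mul_right]
    congr 1 with j
    ring
  have hint : ∀ a j, Integrable (F a j) (volume.restrict (Ioi 0)) := fun a j =>
    (integrableOn_Ioi_pow_mul_exp_neg_mul_sq hL _).const_mul _
  have hterm : ∀ a j, ∫ r in Ioi 0, F a j r = (a / L) ^ j / j ! / (2 * L) := by
    intro a j
    rw [integral_const_mul, integral_Ioi_pow_mul_exp_neg_mul_sq hL, div_pow]
    field_simp
    ring
  -- The series of absolute values is the same series at `|c|`, so termwise integration is legitimate.
  have hnorm : ∀ j, ∫ r in Ioi 0, ‖F c j r‖ = ∫ r in Ioi 0, F |c| j r := by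
    intro j
    refine setIntegral_congr_fun measurableSet_Ioi fun r (hr : 0 < r) => ?_
    simp only [F, norm_mul, norm_div, norm_pow, Real.norm_eq_abs, abs_of_pos hr,
      abs_of_pos (exp_pos _), abs_of_nonneg (Nat.cast_nonneg (α := ℝ) _)]
  have hsum : HasSum (fun j => (c / L) ^ j / j ! / (2 * L)) (exp (c / L) / (2 * L)) := by
    rw [exp_eq_exp_ℝ]
    exact (NormedSpace.expSeries_div_hasSum_exp (c / L)).div_const _
  have hsummable : Summable fun j => ∫ r in Ioi 0, ‖F c j r‖ := by
    simp_rw [hnorm, hterm]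
    exact (Real.summable_pow_div_factorial _).div_const _
  rw [setIntegral_congr_fun measurableSet_Ioi fun r _ => hseries r,
    ← integral_tsum_of_summable_integral_norm (hint c) hsummable, ← hsum.tsum_eq]
  simp_rw [hterm]

theorem rician_fading_expectation_general (Ω σ θ u K : ℝ)
    (hΩ : 0 < Ω) (hσ : 0 < σ) (hθ : 0 < θ) (hθ' : θ ≤ π / 2) (hK : 0 ≤ K) :
    (∫ r in Set.Ioi (0 : ℝ),
        Real.exp (-(r ^ 2 * u ^ 2 / (4 * σ ^ 2 * Real.sin θ ^ 2))) *
          ((2 * (K + 1) * r / Ω) * Real.exp (-(K + (K + 1) * r ^ 2 / Ω)) *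
            ∑' j : ℕ, (K * (K + 1) * r ^ 2 / Ω) ^ j / ((Nat.factorial j : ℝ)) ^ 2))
      = (4 * (K + 1) * σ ^ 2 * Real.sin θ ^ 2 /
            (Ω * u ^ 2 + 4 * (K + 1) * σ ^ 2 * Real.sin θ ^ 2)) *
          Real.exp (-(K * Ω * u ^ 2 / (Ω * u ^ 2 + 4 * (K + 1) * σ ^ 2 * Real.sin θ ^ 2))) := by
  have hs : 0 < sin θ := sin_pos_of_pos_of_lt_pi hθ (by linarith [pi_pos])
  set D := Ω * u ^ 2 + 4 * (K + 1) * σ ^ 2 * sin θ ^ 2 with hD_def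
  set L := u ^ 2 / (4 * σ ^ 2 * sin θ ^ 2) + (K + 1) / Ω with hL_def
  have hL : 0 < L := by positivity
  have hLD : L = D / (4 * σ ^ 2 * sin θ ^ 2 * Ω) := by
    rw [hL_def, hD_def]
    field_simp
  have hintegrand : ∀ r : ℝ,
      exp (-(r ^ 2 * u ^ 2 / (4 * σ ^ 2 * sin θ ^ 2))) *
          ((2 * (K + 1) * r / Ω) * exp (-(K + (K + 1) * r ^ 2 / Ω)) *
            ∑' j : ℕ, (K * (K + 1) * r ^ 2 / Ω) ^ j / (j ! : ℝ) ^ 2)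
        = 2 * (K + 1) / Ω * exp (-K) *
          (r * exp (-(L * r ^ 2)) * ∑' j : ℕ, (K * (K + 1) / Ω * r ^ 2) ^ j / (j ! : ℝ) ^ 2) := by
    intro r
    have hexp : exp (-(r ^ 2 * u ^ 2 / (4 * σ ^ 2 * sin θ ^ 2))) *
        exp (-(K + (K + 1) * r ^ 2 / Ω)) = exp (-K) * exp (-(L * r ^ 2)) := by
      rw [← exp_add, ← exp_add, hL_def]
      ring_nf
    rw [show K * (K + 1) * r ^ 2 / Ω = K * (K + 1) / Ω * r ^ 2 by ring]
    linear_combination (2 * (K + 1) * r / Ω *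
      ∑' j : ℕ, (K * (K + 1) / Ω * r ^ 2) ^ j / (j ! : ℝ) ^ 2) * hexp
  rw [setIntegral_congr_fun measurableSet_Ioi fun r _ => hintegrand r, integral_const_mul,
    integral_Ioi_mul_exp_neg_mul_sq_mul_tsum hL, hLD,
    show -(K * Ω * u ^ 2 / D) = -K + K * (K + 1) / Ω / (D / (4 * σ ^ 2 * sin θ ^ 2 * Ω)) by
      rw [hD_def]; field_simp; ring,
    exp_add]
  field_simp

/-- Rician fading expectation: for `Ω > 0`, `σ > 0`, `θ ∈ (0, π/2]`, `u ≥ 0` and `K ≥ 0`,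
`∫_0^∞ exp(−r²u²/(4σ² sin²θ)) (2(K+1)r/Ω) exp(−(K+(K+1)r²/Ω)) Σ_j (K(K+1)r²/Ω)^j/(j!)² dr
  = (4(K+1)σ² sin²θ/(Ωu² + 4(K+1)σ² sin²θ)) exp(−KΩu²/(Ωu² + 4(K+1)σ² sin²θ))`. -/
theorem rician_fading_expectation (Ω σ θ u K : ℝ)
    (hΩ : 0 < Ω) (hσ : 0 < σ) (hθ : 0 < θ) (hθ' : θ ≤ π / 2) (hu : 0 ≤ u) (hK : 0 ≤ K) :
    (∫ r in Set.Ioi (0 : ℝ),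
        Real.exp (-(r ^ 2 * u ^ 2 / (4 * σ ^ 2 * Real.sin θ ^ 2))) *
          ((2 * (K + 1) * r / Ω) * Real.exp (-(K + (K + 1) * r ^ 2 / Ω)) *
            ∑' j : ℕ, (K * (K + 1) * r ^ 2 / Ω) ^ j / ((Nat.factorial j : ℝ)) ^ 2))
      = (4 * (K + 1) * σ ^ 2 * Real.sin θ ^ 2 /
            (Ω * u ^ 2 + 4 * (K + 1) * σ ^ 2 * Real.sin θ ^ 2)) *
          Real.exp (-(K * Ω * u ^ 2 / (Ω * u ^ 2 + 4 * (K + 1) * σ ^ 2 * Real.sin θ ^ 2))) :=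
  rician_fading_expectation_general Ω σ θ u K hΩ hσ hθ hθ' hK
end

section
/- Let a > 0 be a real number. Then the function F(K) = ( (K+1)/(a+K+1) ) · exp( −K a / (a+K+1) ) is strictly monotonically decreasing in K on [0, ∞); that is, for all 0 ≤ K₁ < K₂, F(K₂) < F(K₁). -/
/-! The derivative of `F(K) = (K+1)/(a+K+1) · exp(-Ka/(a+K+1))` is
`-a²K/(a+K+1)³ · exp(-Ka/(a+K+1))`, which is negative for `K > 0`. -/

open Real

noncomputable def ricianExpectation (a K : ℝ) : ℝ :=
  ((K + 1) / (a + K + 1)) * exp (-(K * a / (a + K + 1)))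

theorem hasDerivAt_ricianExpectation {a K : ℝ} (hK : a + K + 1 ≠ 0) :
    HasDerivAt (ricianExpectation a)
      (-(a ^ 2 * K / (a + K + 1) ^ 3) * exp (-(K * a / (a + K + 1)))) K := by
  have hden : HasDerivAt (fun K : ℝ => a + K + 1) 1 K :=
    ((hasDerivAt_id K).const_add a).add_const 1
  have hratio := ((hasDerivAt_id K).add_const 1).div hden hK
  have hexp := (((hasDerivAt_id K).mul_const a).div hden hK).neg.exp
  refine (hratio.mul hexp).congr_deriv ?_
  simp only [id, Pi.div_apply, Pi.neg_apply]
  field_simp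
  ring

theorem ricianExpectation_strictAntiOn {a : ℝ} (ha₁ : -1 < a) (ha₀ : a ≠ 0) :
    StrictAntiOn (ricianExpectation a) (Set.Ici 0) := by
  have hden {K : ℝ} (hK : 0 ≤ K) : 0 < a + K + 1 := by linarith
  apply strictAntiOn_of_deriv_neg (convex_Ici 0)
  · exact fun K hK => (hasDerivAt_ricianExpectation (hden hK).ne').continuousAt.continuousWithinAt
  · intro K hK
    rw [interior_Ici, Set.mem_Ioi] at hK
    rw [(hasDerivAt_ricianExpectation (hden hK.le).ne').deriv, neg_mul, neg_lt_zero]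
    have := hden hK.le
    positivity

/-- For `a > 0`, the function `F(K) = ((K+1)/(a+K+1)) exp(−Ka/(a+K+1))` is strictly
monotonically decreasing in `K` on `[0, ∞)`. -/
theorem rician_expectation_strict_anti (a : ℝ) (ha : 0 < a)
    (K₁ K₂ : ℝ) (hK₁ : 0 ≤ K₁) (h12 : K₁ < K₂) :
    ((K₂ + 1) / (a + K₂ + 1)) * Real.exp (-(K₂ * a / (a + K₂ + 1)))
      < ((K₁ + 1) / (a + K₁ + 1)) * Real.exp (-(K₁ * a / (a + K₁ + 1))) :=
  ricianExpectation_strictAntiOn (by linarith) ha.ne' hK₁ (hK₁.trans h12.le) h12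
end

section
/- (Optimality of the tail transmission pattern.) Let Ψ, c, μ, σ, and S(θ) be as in the standing definition, let 0 = θ_0 < θ_1 < ⋯ < θ_N = π/2 be a partition of [0, π/2] with weights b_t = (θ_t − θ_{t−1})/π, and set F(L) = Σ_{t=1}^{N} b_t · S(θ_t)^L. Let k ≥ 1 and P ≥ 1 be integers, set n = P·k, and for a ∈ {1, …, P} define ε_a(L) = min{ 1, (2^k − 1) · 2^{n − a k} · F(L) }. Let ℓ_1, …, ℓ_P be positive integers, let δ_1, …, δ_P be natural numbers, and let M = Σ_{i=1}^{P} δ_i. Define the tail sums L_a = Σ_{i=a}^{P} (ℓ_i + δ_i) for the arbitrary pattern and L*_a = M + Σ_{i=a}^{P} ℓ_i for the tail transmission pattern. Then 1 − Π_{a=1}^{P} (1 − ε_a(L*_a)) ≤ 1 − Π_{a=1}^{P} (1 − ε_a(L_a)). -/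
/-!
Since `0 ≤ S(θ) ≤ 1` (each integrand lies in `[0, 1]` and there are `|Ψ|² = 2^{2c}` terms),
`F` and hence every `ε_a` is antitone in the number of symbols. Moving all extra symbols to the
last segment only increases each tail sum, `L_a ≤ L*_a`, so every factor `1 − ε_a` grows.
-/

open Real MeasureTheory

/-- Standing definition: `S(θ) = Σ_{βi∈Ψ} Σ_{βj∈Ψ} 2^{−2c} ∫_ℂ exp(−|h(βi−βj)|²/(4σ² sin²θ)) dμ(h)`. -/
noncomputable def Sfun (Ψ : Finset ℂ) (c : ℕ) (μ : Measure ℂ) (σ θ : ℝ) : ℝ :=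
  ∑ βi ∈ Ψ, ∑ βj ∈ Ψ, ((2 : ℝ) ^ (2 * c))⁻¹ *
    ∫ h, Real.exp (-(‖h * (βi - βj)‖ ^ 2 / (4 * σ ^ 2 * Real.sin θ ^ 2))) ∂μ

lemma integral_mem_Icc_of_mem_Icc {α : Type*} [MeasurableSpace α] (μ : Measure α)
    [IsProbabilityMeasure μ] {f : α → ℝ} (hf : ∀ x, f x ∈ Set.Icc 0 1) :
    ∫ x, f x ∂μ ∈ Set.Icc 0 1 := by
  refine ⟨integral_nonneg fun x => (hf x).1, ?_⟩
  have hnorm : ∀ᵐ x ∂μ, ‖f x‖ ≤ 1 := ae_of_all _ fun x => by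
    rw [Real.norm_of_nonneg (hf x).1]; exact (hf x).2
  simpa using (le_abs_self _).trans (norm_integral_le_of_norm_le_const hnorm)

lemma exp_neg_mem_Icc {x : ℝ} (hx : 0 ≤ x) : Real.exp (-x) ∈ Set.Icc 0 1 :=
  ⟨(Real.exp_pos _).le, Real.exp_le_one_iff.2 (neg_nonpos.2 hx)⟩

lemma Sfun_mem_Icc (Ψ : Finset ℂ) (c : ℕ) (hΨ : Ψ.card = 2 ^ c) (μ : Measure ℂ)
    [IsProbabilityMeasure μ] (σ θ : ℝ) : Sfun Ψ c μ σ θ ∈ Set.Icc 0 1 := by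
  have hI : ∀ βi βj : ℂ, ∫ h, Real.exp (-(‖h * (βi - βj)‖ ^ 2 /
      (4 * σ ^ 2 * Real.sin θ ^ 2))) ∂μ ∈ Set.Icc 0 1 := fun βi βj =>
    integral_mem_Icc_of_mem_Icc μ fun h => exp_neg_mem_Icc (by positivity)
  have hw : (0 : ℝ) ≤ ((2 : ℝ) ^ (2 * c))⁻¹ := by positivity
  refine ⟨Finset.sum_nonneg fun i _ => Finset.sum_nonneg fun j _ =>
    mul_nonneg hw (hI i j).1, ?_⟩
  calc Sfun Ψ c μ σ θ ≤ ∑ _βi ∈ Ψ, ∑ _βj ∈ Ψ, ((2 : ℝ) ^ (2 * c))⁻¹ :=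
        Finset.sum_le_sum fun i _ => Finset.sum_le_sum fun j _ =>
          mul_le_of_le_one_right hw (hI i j).2
    _ = 1 := by
        simp only [Finset.sum_const, hΨ, nsmul_eq_mul]
        push_cast
        rw [mul_comm 2 c, pow_mul]
        field_simp

lemma antitone_sum_mul_pow {ι : Type*} (s : Finset ι) {w x : ι → ℝ} (hw : ∀ t ∈ s, 0 ≤ w t)
    (hx : ∀ t ∈ s, x t ∈ Set.Icc 0 1) :
    Antitone fun L : ℕ => ∑ t ∈ s, w t * x t ^ L := fun _ _ hL =>
  Finset.sum_le_sum fun t ht =>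
    mul_le_mul_of_nonneg_left (pow_le_pow_of_le_one (hx t ht).1 (hx t ht).2 hL) (hw t ht)

lemma tail_sum_add_le {P a : ℕ} (ha : 1 ≤ a) (ℓ δ : ℕ → ℕ) :
    ∑ i ∈ Finset.Icc a P, (ℓ i + δ i) ≤ ∑ i ∈ Finset.Icc 1 P, δ i + ∑ i ∈ Finset.Icc a P, ℓ i := by
  rw [Finset.sum_add_distrib, add_comm]
  exact Nat.add_le_add_right (Finset.sum_le_sum_of_subset (Finset.Icc_subset_Icc_left ha)) _

lemma one_sub_prod_one_sub_le_one_sub_prod_one_sub {ι : Type*} (s : Finset ι) {x y : ι → ℝ}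
    (hxy : ∀ i ∈ s, x i ≤ y i) (hy : ∀ i ∈ s, y i ≤ 1) :
    1 - ∏ i ∈ s, (1 - x i) ≤ 1 - ∏ i ∈ s, (1 - y i) :=
  sub_le_sub_left (Finset.prod_le_prod (fun i hi => sub_nonneg.2 (hy i hi))
    (fun i hi => sub_le_sub_left (hxy i hi) 1)) 1

theorem ttp_optimal_general (Ψ : Finset ℂ) (c : ℕ) (hΨ : Ψ.card = 2 ^ c)
    (μ : Measure ℂ) [IsProbabilityMeasure μ] (σ : ℝ)
    (N : ℕ) (θ : ℕ → ℝ)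
    (hmono : ∀ t < N, θ t < θ (t + 1))
    (F : ℕ → ℝ)
    (hF : ∀ L, F L = ∑ t ∈ Finset.range N,
        ((θ (t + 1) - θ t) / π) * Sfun Ψ c μ σ (θ (t + 1)) ^ L)
    (k P n : ℕ)
    (ε : ℕ → ℕ → ℝ)
    (hε : ∀ a L, ε a L = min 1 (((2 : ℝ) ^ k - 1) * 2 ^ (n - a * k) * F L))
    (ℓ δ : ℕ → ℕ)
    (M : ℕ) (hM : M = ∑ i ∈ Finset.Icc 1 P, δ i)
    (Lpat Lstar : ℕ → ℕ)
    (hLpat : ∀ a, Lpat a = ∑ i ∈ Finset.Icc a P, (ℓ i + δ i))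
    (hLstar : ∀ a, Lstar a = M + ∑ i ∈ Finset.Icc a P, ℓ i) :
    1 - ∏ a ∈ Finset.Icc 1 P, (1 - ε a (Lstar a))
      ≤ 1 - ∏ a ∈ Finset.Icc 1 P, (1 - ε a (Lpat a)) := by
  have hF_anti : Antitone F := by
    rw [funext hF]
    exact antitone_sum_mul_pow _
      (fun t ht => div_nonneg (sub_nonneg.2 (hmono t (Finset.mem_range.1 ht)).le) pi_pos.le)
      (fun t _ => Sfun_mem_Icc Ψ c hΨ μ σ _)
  have hε_anti : ∀ a, Antitone (ε a) := fun a => by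
    have hC : (0 : ℝ) ≤ ((2 : ℝ) ^ k - 1) * 2 ^ (n - a * k) :=
      mul_nonneg (sub_nonneg.2 (one_le_pow₀ one_le_two)) (by positivity)
    rw [funext (hε a)]
    exact antitone_const.min (hF_anti.const_mul hC)
  refine one_sub_prod_one_sub_le_one_sub_prod_one_sub _ (fun a ha => hε_anti a ?_)
    (fun a _ => by rw [hε]; exact min_le_left _ _)
  rw [hLpat, hLstar, hM]
  exact tail_sum_add_le (Finset.mem_Icc.1 ha).1 ℓ δ

/-- (Optimality of the tail transmission pattern.)  With `F(L) = Σ_t b_t S(θ_t)^L`,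
`n = P·k`, `ε_a(L) = min{1, (2^k − 1) 2^{n−ak} F(L)}`, tail sums
`L_a = Σ_{i=a}^P (ℓ_i + δ_i)` and `L*_a = M + Σ_{i=a}^P ℓ_i` where `M = Σ_i δ_i`,
the BLER upper bound of the tail transmission pattern is the lowest:
`1 − Π_a (1 − ε_a(L*_a)) ≤ 1 − Π_a (1 − ε_a(L_a))`. -/
theorem ttp_optimal (Ψ : Finset ℂ) (c : ℕ) (hc : 0 < c) (hΨ : Ψ.card = 2 ^ c)
    (μ : Measure ℂ) [IsProbabilityMeasure μ] (σ : ℝ) (hσ : 0 < σ)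
    (N : ℕ) (hN : 0 < N) (θ : ℕ → ℝ)
    (h0 : θ 0 = 0) (hend : θ N = π / 2) (hmono : ∀ t < N, θ t < θ (t + 1))
    (F : ℕ → ℝ)
    (hF : ∀ L, F L = ∑ t ∈ Finset.range N,
        ((θ (t + 1) - θ t) / π) * Sfun Ψ c μ σ (θ (t + 1)) ^ L)
    (k P n : ℕ) (hk : 1 ≤ k) (hP : 1 ≤ P) (hn : n = P * k)
    (ε : ℕ → ℕ → ℝ)
    (hε : ∀ a L, ε a L = min 1 (((2 : ℝ) ^ k - 1) * 2 ^ (n - a * k) * F L))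
    (ℓ δ : ℕ → ℕ) (hℓ : ∀ i ∈ Finset.Icc 1 P, 0 < ℓ i)
    (M : ℕ) (hM : M = ∑ i ∈ Finset.Icc 1 P, δ i)
    (Lpat Lstar : ℕ → ℕ)
    (hLpat : ∀ a, Lpat a = ∑ i ∈ Finset.Icc a P, (ℓ i + δ i))
    (hLstar : ∀ a, Lstar a = M + ∑ i ∈ Finset.Icc a P, ℓ i) :
    1 - ∏ a ∈ Finset.Icc 1 P, (1 - ε a (Lstar a))
      ≤ 1 - ∏ a ∈ Finset.Icc 1 P, (1 - ε a (Lpat a)) :=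
  ttp_optimal_general Ψ c hΨ μ σ N θ hmono F hF k P n ε hε ℓ δ M hM Lpat Lstar hLpat hLstar
end
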